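/- The map π assigning to each stabilizer α the functional πα on the algebra 𝒜 of periodic functions, (πα)(u) = the eventual value of the sequence k ↦ u(α_k), is a surjective ring homomorphism from the ring 𝒮 of stabilizers (with pointwise addition and multiplication of sequences) onto the ring 𝒢 of characters of 𝒜 (with plus-convolution ⊕ as addition and dot-convolution ⊙ as multiplication), and its kernel is exactly the set 𝒞₀ of 0-sequences. In particular, πα is a character for every stabilizer α, and the induced quotient map 𝒮/𝒞₀ → 𝒢 is a ring isomorphism of the polyadic ring 𝒫 onto 𝒢 which, for every positive integer p, carries the ideal 𝒢^(p) = p·𝒫 onto the cluster V_p = {φ ∈ 𝒢 : φ(u) = u(0) for all u ∈ 𝒜_p}; hence this map is an isomorphism of topological rings from (𝒫, σ) onto (𝒢, γ), where σ is the topology on 𝒫 with the ideals 𝒢^(n) as a base of zero neighborhoods and γ is the Gelfand topology on 𝒢 (the topology of pointwise convergence on 𝒜). -/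

import Mathlib

open Function

noncomputable section

/-- The subalgebra of `ℤ → ℂ` consisting of all periodic functions. -/
def PerFun : Subalgebra ℂ (ℤ → ℂ) where
  carrier := {u | ∃ p : ℤ, 0 < p ∧ Function.Periodic u p}
  add_mem' := by
    rintro u v ⟨p, hp, hu⟩ ⟨q, hq, hv⟩
    refine ⟨p * q, mul_pos hp hq, ?_⟩
    have hu' : Function.Periodic u (p * q) := by simpa [mul_comm] using hu.int_mul q
    have hv' : Function.Periodic v (p * q) := hv.int_mul p
    exact hu'.add hv'
  mul_mem' := by
    rintro u v ⟨p, hp, hu⟩ ⟨q, hq, hv⟩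
    refine ⟨p * q, mul_pos hp hq, ?_⟩
    have hu' : Function.Periodic u (p * q) := by simpa [mul_comm] using hu.int_mul q
    have hv' : Function.Periodic v (p * q) := hv.int_mul p
    exact hu'.mul hv'
  one_mem' := ⟨1, one_pos, fun _ => rfl⟩
  zero_mem' := ⟨1, one_pos, fun _ => rfl⟩
  algebraMap_mem' := fun c => ⟨1, one_pos, fun _ => rfl⟩

/-- `u` belongs to the subalgebra `𝒜_p` of `p`-periodic functions. -/
def InAp (p : ℤ) (u : ↥PerFun) : Prop := Function.Periodic (u : ℤ → ℂ) p

/-- A character of the algebra `𝒜` of periodic functions: a nonzero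
`ℂ`-linear multiplicative functional. -/
def IsChar (ψ : ↥PerFun → ℂ) : Prop :=
  (∀ u v, ψ (u + v) = ψ u + ψ v) ∧
  (∀ (c : ℂ) (u), ψ (c • u) = c * ψ u) ∧
  (∀ u v, ψ (u * v) = ψ u * ψ v) ∧
  ψ ≠ 0

lemma shiftAdd_mem (u : ↥PerFun) (x : ℤ) :
    (fun y => (u : ℤ → ℂ) (x + y)) ∈ PerFun := by
  obtain ⟨p, hp, hu⟩ := u.2
  refine ⟨p, hp, fun y => ?_⟩
  show (u : ℤ → ℂ) (x + (y + p)) = (u : ℤ → ℂ) (x + y)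
  rw [← add_assoc]
  exact hu (x + y)

/-- For `u ∈ 𝒜`, the function `y ↦ u (x + y)`, as an element of `𝒜`. -/
def shiftAdd (u : ↥PerFun) (x : ℤ) : ↥PerFun :=
  ⟨fun y => (u : ℤ → ℂ) (x + y), shiftAdd_mem u x⟩

lemma shiftMul_mem (u : ↥PerFun) (x : ℤ) :
    (fun y => (u : ℤ → ℂ) (x * y)) ∈ PerFun := by
  obtain ⟨p, hp, hu⟩ := u.2
  refine ⟨p, hp, fun y => ?_⟩
  show (u : ℤ → ℂ) (x * (y + p)) = (u : ℤ → ℂ) (x * y)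
  rw [mul_add]
  exact (hu.int_mul x) (x * y)

/-- For `u ∈ 𝒜`, the function `y ↦ u (x * y)`, as an element of `𝒜`. -/
def shiftMul (u : ↥PerFun) (x : ℤ) : ↥PerFun :=
  ⟨fun y => (u : ℤ → ℂ) (x * y), shiftMul_mem u x⟩

lemma negArg_mem (u : ↥PerFun) :
    (fun y => (u : ℤ → ℂ) (-y)) ∈ PerFun := by
  obtain ⟨p, hp, hu⟩ := u.2
  refine ⟨p, hp, fun y => ?_⟩
  show (u : ℤ → ℂ) (-(y + p)) = (u : ℤ → ℂ) (-y)
  rw [neg_add, ← sub_eq_add_neg]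
  exact hu.sub_eq (-y)

/-- For `u ∈ 𝒜`, the function `x ↦ u (-x)`, as an element of `𝒜`. -/
def negArg (u : ↥PerFun) : ↥PerFun :=
  ⟨fun y => (u : ℤ → ℂ) (-y), negArg_mem u⟩

lemma plusInner_mem (ψ : ↥PerFun → ℂ) (u : ↥PerFun) :
    (fun x => ψ (shiftAdd u x)) ∈ PerFun := by
  obtain ⟨p, hp, hu⟩ := u.2
  refine ⟨p, hp, fun x => ?_⟩
  show ψ (shiftAdd u (x + p)) = ψ (shiftAdd u x)
  congr 1
  apply Subtype.ext
  funext y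
  show (u : ℤ → ℂ) (x + p + y) = (u : ℤ → ℂ) (x + y)
  rw [show x + p + y = x + y + p by ring]
  exact hu (x + y)

lemma dotInner_mem (ψ : ↥PerFun → ℂ) (u : ↥PerFun) :
    (fun x => ψ (shiftMul u x)) ∈ PerFun := by
  obtain ⟨p, hp, hu⟩ := u.2
  refine ⟨p, hp, fun x => ?_⟩
  show ψ (shiftMul u (x + p)) = ψ (shiftMul u x)
  congr 1
  apply Subtype.ext
  funext y
  show (u : ℤ → ℂ) ((x + p) * y) = (u : ℤ → ℂ) (x * y)
  rw [show (x + p) * y = x * y + y * p by ring]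
  exact (hu.int_mul y) (x * y)

/-- The plus-convolution `(φ ⊕ ψ)(u) = φ (x ↦ ψ (y ↦ u (x + y)))`. -/
def plusConv (φ ψ : ↥PerFun → ℂ) : ↥PerFun → ℂ :=
  fun u => φ ⟨fun x => ψ (shiftAdd u x), plusInner_mem ψ u⟩

/-- The dot-convolution `(φ ⊙ ψ)(u) = φ (x ↦ ψ (y ↦ u (x * y)))`. -/
def dotConv (φ ψ : ↥PerFun → ℂ) : ↥PerFun → ℂ :=
  fun u => φ ⟨fun x => ψ (shiftMul u x), dotInner_mem ψ u⟩

/-- The reflection `(⊖ φ)(u) = φ (x ↦ u (-x))`. -/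
def reflect (φ : ↥PerFun → ℂ) : ↥PerFun → ℂ :=
  fun u => φ (negArg u)

/-- The functional `θ : u ↦ u 0`. -/
def theta : ↥PerFun → ℂ := fun u => (u : ℤ → ℂ) 0

/-- The functional `ε : u ↦ u 1`. -/
def eps : ↥PerFun → ℂ := fun u => (u : ℤ → ℂ) 1


open Filter

/-- A sequence `α : ℕ → ℤ` is a stabilizer: for every `u ∈ 𝒜` the sequence
`k ↦ u (α k)` is eventually constant. -/
def IsStab (α : ℕ → ℤ) : Prop :=
  ∀ u : ↥PerFun, ∃ v : ℂ, ∀ᶠ k in Filter.cofinite, (u : ℤ → ℂ) (α k) = v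

/-- `α` is a `0`-sequence: every positive integer divides `α k` for all but
finitely many `k`. -/
def IsZeroSeq (α : ℕ → ℤ) : Prop :=
  ∀ n : ℤ, 0 < n → ∀ᶠ k in Filter.cofinite, n ∣ α k

/-- The functional `π α` associated to a sequence `α`: the value `(π α) u` is
the eventual (limiting) value of the sequence `k ↦ u (α k)`. -/
noncomputable def piChar (α : ℕ → ℤ) : ↥PerFun → ℂ :=
  fun u => limUnder Filter.cofinite (fun k => (u : ℤ → ℂ) (α k))

/-- The type of stabilizers. -/
def StabT := {α : ℕ → ℤ // IsStab α}

/-- Two stabilizers are equivalent iff their difference is a `0`-sequence. -/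
instance stabSetoid : Setoid StabT where
  r a b := IsZeroSeq (fun k => a.1 k - b.1 k)
  iseqv := by
    refine ⟨fun a n hn => ?_, fun {a b} h n hn => ?_, fun {a b c} h1 h2 n hn => ?_⟩
    · exact Filter.Eventually.of_forall fun k => by simp
    · filter_upwards [h n hn] with k hk
      have he : b.1 k - a.1 k = -(a.1 k - b.1 k) := by ring
      rw [he]; exact hk.neg_right
    · filter_upwards [h1 n hn, h2 n hn] with k hk1 hk2
      have he : a.1 k - c.1 k = (a.1 k - b.1 k) + (b.1 k - c.1 k) := by ring
      rw [he]; exact dvd_add hk1 hk2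

/-- The polyadic ring `𝒫 = 𝒮 ⁄ 𝒞₀`: classes of stabilizers modulo `0`-sequences. -/
def P19 := Quotient stabSetoid

/-- The zero stabilizer (the constant sequence `0`). -/
def zeroStab : StabT :=
  ⟨fun _ => 0, fun u => ⟨(u : ℤ → ℂ) 0, Filter.Eventually.of_forall fun _ => rfl⟩⟩

/-- The grid `𝒢(p;x) = x + 𝒢⁽ᵖ⁾ ⊆ 𝒫`, described via representatives:
`y ∈ 𝒢(p;x)` iff `y` is represented by `a + p·γ` for some representative `a`
of `x` and some stabilizer `γ`. -/
def gridP (p : ℤ) (x : P19) : Set P19 :=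
  {y | ∃ a b : StabT, ⟦a⟧ = x ∧ ⟦b⟧ = y ∧
    ∃ γ : StabT, IsZeroSeq (fun k => b.1 k - (a.1 k + p * γ.1 k))}

/-- The topology `σ` on `𝒫`: the ring topology with the ideals `𝒢⁽ⁿ⁾` as a base
of neighborhoods of zero, i.e., the topology generated by all grids. -/
def sigmaT : TopologicalSpace P19 :=
  TopologicalSpace.generateFrom {S | ∃ p : ℤ, 0 < p ∧ ∃ x : P19, S = gridP p x}

/-- The set of characters `𝒢`, as a type. -/
def Gchar := {ψ : ↥PerFun → ℂ // IsChar ψ}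

/-- The Gelfand topology `γ` on `𝒢`: the topology of pointwise convergence
on `𝒜`, generated by the subbasic sets `U_R(u;ψ)`. -/
def gelfandT : TopologicalSpace Gchar :=
  TopologicalSpace.generateFrom
    {S | ∃ (u : ↥PerFun) (ψ : Gchar) (R : ℝ), 0 < R ∧
      S = {φ : Gchar | ‖φ.1 u - ψ.1 u‖ < R}}

/-!
A character `ψ` of `𝒜` takes on each `u` one of the values of `u`: otherwise `u - ψ u` would be
invertible in `𝒜` and lie in the kernel of `ψ`. Applied to `|n % p - r % p|² + |v - ψ v|²`,
which lies in the kernel of `ψ` once `ψ (n ↦ n % p) = r % p`, this shows that on the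
`p`-periodic functions `ψ` is evaluation at a single residue `r` mod `p`. Dually, a stabilizer is
exactly a sequence that is eventually constant modulo every `p`, and on `𝒜_p` the functional
`π α` is evaluation at that eventual residue. Everything else is a comparison of residues: the
homomorphism property, the kernel `𝒞₀`, the grids `x + 𝒢⁽ᵖ⁾` as the sets of characters agreeing
on `𝒜_p`, and surjectivity, a character with residues `r_q` being `π` of `k ↦ r_{(k+1)!}`.
-/

theorem Function.Periodic.eq_of_intModEq {β : Type*} {u : ℤ → β} {p m n : ℤ}
    (hu : Function.Periodic u p) (h : m ≡ n [ZMOD p]) : u m = u n := by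
  obtain ⟨k, hk⟩ := h.dvd
  rw [show n = m + k * p by linarith]
  exact (hu.int_mul k m).symm

theorem comp_mem_perFun (g : ℂ → ℂ) (u : ↥PerFun) : g ∘ (u : ℤ → ℂ) ∈ PerFun :=
  let ⟨p, hp, hu⟩ := u.2
  ⟨p, hp, hu.comp g⟩

/-- `n ↦ n % p`: a `p`-periodic function that separates the residue classes mod `p`. -/
def resFun (p : ℤ) (hp : 0 < p) : ↥PerFun :=
  ⟨fun n => ((n % p : ℤ) : ℂ), p, hp, fun n => by simp⟩

theorem inAp_resFun {p : ℤ} (hp : 0 < p) : InAp p (resFun p hp) := fun n => by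
  simp [resFun]

theorem intModEq_of_norm_resFun_sub_lt_one {p : ℤ} (hp : 0 < p) {m n : ℤ}
    (h : ‖(resFun p hp : ℤ → ℂ) m - (resFun p hp : ℤ → ℂ) n‖ < 1) : m ≡ n [ZMOD p] := by
  have h' : |m % p - n % p| < 1 := by
    have : ((|m % p - n % p| : ℤ) : ℝ) < 1 := by
      simpa [resFun, ← Int.cast_sub, Complex.norm_intCast, ← Int.cast_abs] using h
    exact_mod_cast this
  exact sub_eq_zero.1 (Int.abs_lt_one_iff.1 h')

open scoped ComplexOrder in
theorem eq_zero_and_eq_zero_of_mul_star_add_mul_star {a b : ℂ}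
    (h : a * star a + b * star b = 0) : a = 0 ∧ b = 0 := by
  have hab := (add_eq_zero_iff_of_nonneg (mul_star_self_nonneg a) (mul_star_self_nonneg b)).1 h
  have key : ∀ z : ℂ, z * star z = 0 → z = 0 := fun z hz =>
    (mul_eq_zero.1 hz).elim id star_eq_zero.1
  exact ⟨key a hab.1, key b hab.2⟩

theorem AlgHom.apply_sub_algebraMap_apply {R A : Type*} [CommRing R] [Ring A] [Algebra R A]
    (f : A →ₐ[R] R) (a : A) : f (a - algebraMap R A (f a)) = 0 := by
  simp

namespace IsChar

variable {ψ : ↥PerFun → ℂ}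

theorem map_one (h : IsChar ψ) : ψ 1 = 1 := by
  have hne : ψ 1 ≠ 0 := fun h1 => h.2.2.2 <| funext fun u => by
    simpa [h1] using h.2.2.1 u 1
  exact mul_left_cancel₀ hne (by simpa using (h.2.2.1 1 1).symm)

def toAlgHom (h : IsChar ψ) : ↥PerFun →ₐ[ℂ] ℂ where
  toFun := ψ
  map_one' := h.map_one
  map_mul' := h.2.2.1
  map_zero' := by simpa using h.2.1 0 0
  map_add' := h.1
  commutes' c := by simpa [Algebra.algebraMap_eq_smul_one, h.map_one] using h.2.1 c 1

theorem exists_eq_apply (h : IsChar ψ) (u : ↥PerFun) : ∃ n, ψ u = (u : ℤ → ℂ) n := by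
  by_contra! hne
  set g := u - algebraMap ℂ ↥PerFun (h.toAlgHom u)
  have hg : ∀ n, (g : ℤ → ℂ) n ≠ 0 := fun n => sub_ne_zero.2 (hne n).symm
  have hinv : g * ⟨_, comp_mem_perFun Inv.inv g⟩ = 1 :=
    Subtype.ext <| funext fun n => mul_inv_cancel₀ (hg n)
  have := congrArg h.toAlgHom hinv
  rw [map_mul, _root_.map_one, AlgHom.apply_sub_algebraMap_apply, zero_mul] at this
  exact zero_ne_one this

theorem exists_residue (h : IsChar ψ) {p : ℤ} (hp : 0 < p) :
    ∃ r, ∀ u, InAp p u → ψ u = (u : ℤ → ℂ) r := by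
  obtain ⟨r, hr⟩ := h.exists_eq_apply (resFun p hp)
  refine ⟨r, fun v hv => ?_⟩
  set f := h.toAlgHom
  set s := resFun p hp - algebraMap ℂ ↥PerFun (f (resFun p hp))
  set t := v - algebraMap ℂ ↥PerFun (f v)
  obtain ⟨n, hn⟩ := h.exists_eq_apply
    (s * ⟨_, comp_mem_perFun star s⟩ + t * ⟨_, comp_mem_perFun star t⟩)
  have hF : f (s * ⟨_, comp_mem_perFun star s⟩ + t * ⟨_, comp_mem_perFun star t⟩) = 0 := by
    rw [map_add, map_mul, map_mul, f.apply_sub_algebraMap_apply,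
      f.apply_sub_algebraMap_apply, zero_mul, zero_mul, add_zero]
  rw [show ψ _ = 0 from hF] at hn
  obtain ⟨hs, ht⟩ := eq_zero_and_eq_zero_of_mul_star_add_mul_star hn.symm
  have hnr : n ≡ r [ZMOD p] := by
    refine intModEq_of_norm_resFun_sub_lt_one hp ?_
    rw [← hr, show (resFun p hp : ℤ → ℂ) n = ψ (resFun p hp) from sub_eq_zero.1 hs]
    simp
  rw [← hv.eq_of_intModEq hnr]
  exact (sub_eq_zero.1 ht).symm

end IsChar

section Stabilizers

variable {α β : ℕ → ℤ}

theorem piChar_apply_of_eventually_eq {u : ↥PerFun} {c : ℂ}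
    (h : ∀ᶠ k in cofinite, (u : ℤ → ℂ) (α k) = c) : piChar α u = c :=
  (tendsto_const_nhds.congr' (h.mono fun _ hk => hk.symm)).limUnder_eq

theorem IsStab.eventually_eq_piChar (hα : IsStab α) (u : ↥PerFun) :
    ∀ᶠ k in cofinite, (u : ℤ → ℂ) (α k) = piChar α u := by
  obtain ⟨c, hc⟩ := hα u
  rwa [piChar_apply_of_eventually_eq hc]

theorem piChar_apply_of_eventually_modEq {p r : ℤ} (hr : ∀ᶠ k in cofinite, α k ≡ r [ZMOD p])
    {u : ↥PerFun} (hu : InAp p u) : piChar α u = (u : ℤ → ℂ) r :=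
  piChar_apply_of_eventually_eq (hr.mono fun _ hk => hu.eq_of_intModEq hk)

theorem IsStab.exists_eventually_modEq (hα : IsStab α) {p : ℤ} (hp : 0 < p) :
    ∃ r, ∀ᶠ k in cofinite, α k ≡ r [ZMOD p] := by
  have hres := hα.eventually_eq_piChar (resFun p hp)
  obtain ⟨k₀, hk₀⟩ := hres.exists
  refine ⟨α k₀, hres.mono fun k hk => ?_⟩
  have : ((α k % p : ℤ) : ℂ) = ((α k₀ % p : ℤ) : ℂ) := hk.trans hk₀.symm
  exact_mod_cast this

theorem isStab_iff : IsStab α ↔ ∀ p, 0 < p → ∃ r, ∀ᶠ k in cofinite, α k ≡ r [ZMOD p] := by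
  refine ⟨fun hα p hp => hα.exists_eventually_modEq hp, fun h u => ?_⟩
  obtain ⟨p, hp, hu⟩ := u.2
  obtain ⟨r, hr⟩ := h p hp
  exact ⟨_, hr.mono fun _ hk => hu.eq_of_intModEq hk⟩

theorem IsStab.add (hα : IsStab α) (hβ : IsStab β) : IsStab (fun k => α k + β k) :=
  isStab_iff.2 fun _ hp =>
    let ⟨a, ha⟩ := hα.exists_eventually_modEq hp
    let ⟨b, hb⟩ := hβ.exists_eventually_modEq hp
    ⟨a + b, (ha.and hb).mono fun _ h => h.1.add h.2⟩

theorem IsStab.sub (hα : IsStab α) (hβ : IsStab β) : IsStab (fun k => α k - β k) :=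
  isStab_iff.2 fun _ hp =>
    let ⟨a, ha⟩ := hα.exists_eventually_modEq hp
    let ⟨b, hb⟩ := hβ.exists_eventually_modEq hp
    ⟨a - b, (ha.and hb).mono fun _ h => h.1.sub h.2⟩

theorem IsStab.mul (hα : IsStab α) (hβ : IsStab β) : IsStab (fun k => α k * β k) :=
  isStab_iff.2 fun _ hp =>
    let ⟨a, ha⟩ := hα.exists_eventually_modEq hp
    let ⟨b, hb⟩ := hβ.exists_eventually_modEq hp
    ⟨a * b, (ha.and hb).mono fun _ h => h.1.mul h.2⟩

theorem IsStab.ediv (hα : IsStab α) {p : ℤ} (hp : 0 < p) (hdvd : ∀ᶠ k in cofinite, p ∣ α k) :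
    IsStab (fun k => α k / p) := by
  refine isStab_iff.2 fun n hn => ?_
  obtain ⟨r, hr⟩ := hα.exists_eventually_modEq (mul_pos hp hn)
  have hev := hr.and hdvd
  obtain ⟨k₀, hk₀⟩ := hev.exists
  refine ⟨α k₀ / p, hev.mono fun k hk => Int.ModEq.mul_left_cancel' hp.ne' ?_⟩
  rw [Int.mul_ediv_cancel' hk.2, Int.mul_ediv_cancel' hk₀.2]
  exact hk.1.trans hk₀.1.symm

theorem isChar_piChar (hα : IsStab α) : IsChar (piChar α) := by
  have hev := hα.eventually_eq_piChar
  refine ⟨fun u v => ?_, fun c u => ?_, fun u v => ?_, fun h => ?_⟩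
  · exact piChar_apply_of_eventually_eq <| (hev u).and (hev v) |>.mono fun _ h => by
      simp [h.1, h.2]
  · exact piChar_apply_of_eventually_eq <| (hev u).mono fun _ h => by simp [h]
  · exact piChar_apply_of_eventually_eq <| (hev u).and (hev v) |>.mono fun _ h => by
      simp [h.1, h.2]
  · have h1 : piChar α 1 = 1 := piChar_apply_of_eventually_eq (.of_forall fun _ => rfl)
    simp [h] at h1

theorem piChar_add (hα : IsStab α) (hβ : IsStab β) :
    piChar (fun k => α k + β k) = plusConv (piChar α) (piChar β) := by
  funext u
  obtain ⟨p, hp, hu⟩ := u.2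
  obtain ⟨a, ha⟩ := hα.exists_eventually_modEq hp
  obtain ⟨b, hb⟩ := hβ.exists_eventually_modEq hp
  have hinner : ∀ x, piChar β (shiftAdd u x) = (u : ℤ → ℂ) (x + b) := fun x =>
    piChar_apply_of_eventually_modEq hb (hu.const_add x)
  rw [piChar_apply_of_eventually_modEq ((ha.and hb).mono fun _ h => h.1.add h.2) hu,
    plusConv, piChar_apply_of_eventually_modEq ha]
  · exact (hinner a).symm
  · intro x
    show piChar β (shiftAdd u (x + p)) = piChar β (shiftAdd u x)
    rw [hinner, hinner, add_right_comm]
    exact hu _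

theorem piChar_mul (hα : IsStab α) (hβ : IsStab β) :
    piChar (fun k => α k * β k) = dotConv (piChar α) (piChar β) := by
  funext u
  obtain ⟨p, hp, hu⟩ := u.2
  obtain ⟨a, ha⟩ := hα.exists_eventually_modEq hp
  obtain ⟨b, hb⟩ := hβ.exists_eventually_modEq hp
  have hinner : ∀ x, piChar β (shiftMul u x) = (u : ℤ → ℂ) (x * b) := fun x =>
    piChar_apply_of_eventually_modEq hb fun y => by
      simpa [shiftMul, mul_add, mul_comm x p] using hu.int_mul x (x * y)
  rw [piChar_apply_of_eventually_modEq ((ha.and hb).mono fun _ h => h.1.mul h.2) hu,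
    dotConv, piChar_apply_of_eventually_modEq ha]
  · exact (hinner a).symm
  · intro x
    show piChar β (shiftMul u (x + p)) = piChar β (shiftMul u x)
    rw [hinner, hinner, add_mul, mul_comm p b]
    exact hu.int_mul b _

theorem piChar_eqOn_iff (hα : IsStab α) (hβ : IsStab β) {p : ℤ} (hp : 0 < p) :
    (∀ u, InAp p u → piChar α u = piChar β u) ↔ ∀ᶠ k in cofinite, p ∣ α k - β k := by
  obtain ⟨b, hb⟩ := hβ.exists_eventually_modEq hp
  have hβu : ∀ u, InAp p u → piChar β u = (u : ℤ → ℂ) b := fun u hu =>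
    piChar_apply_of_eventually_modEq hb hu
  constructor
  · intro h
    obtain ⟨a, ha⟩ := hα.exists_eventually_modEq hp
    have hab : a ≡ b [ZMOD p] := by
      refine intModEq_of_norm_resFun_sub_lt_one hp ?_
      rw [← piChar_apply_of_eventually_modEq ha (inAp_resFun hp), ← hβu _ (inAp_resFun hp),
        h _ (inAp_resFun hp), sub_self, norm_zero]
      exact one_pos
    exact (ha.and hb).mono fun _ hk => (hk.2.trans (hk.1.trans hab).symm).dvd
  · intro h u hu
    rw [hβu u hu]
    refine piChar_apply_of_eventually_modEq ((h.and hb).mono fun _ hk => ?_) hu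
    exact (Int.modEq_iff_dvd.2 hk.1).symm.trans hk.2

theorem piChar_eq_iff (hα : IsStab α) (hβ : IsStab β) :
    piChar α = piChar β ↔ IsZeroSeq (fun k => α k - β k) := by
  refine ⟨fun h n hn => (piChar_eqOn_iff hα hβ hn).1 fun u _ => congrFun h u, fun h => ?_⟩
  funext u
  obtain ⟨p, hp, hu⟩ := u.2
  exact (piChar_eqOn_iff hα hβ hp).2 (h p hp) u hu

theorem piChar_zero : piChar (fun _ => 0) = theta :=
  funext fun _ => piChar_apply_of_eventually_eq (.of_forall fun _ => rfl)

theorem piChar_eq_theta_iff (hα : IsStab α) : piChar α = theta ↔ IsZeroSeq α := by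
  rw [← piChar_zero, piChar_eq_iff (β := fun _ => 0) hα zeroStab.2]
  simp only [sub_zero]

end Stabilizers

/-- Every period divides `(k+1)!` for large `k`. -/
theorem IsChar.exists_piChar_eq {ψ : ↥PerFun → ℂ} (hψ : IsChar ψ) :
    ∃ α, IsStab α ∧ piChar α = ψ := by
  choose r hr using fun k : ℕ => hψ.exists_residue (Int.natCast_pos.2 (k + 1).factorial_pos)
  have hev : ∀ u : ↥PerFun, ∀ᶠ k in cofinite, (u : ℤ → ℂ) (r k) = ψ u := by
    intro u
    obtain ⟨q, hq, hu⟩ := u.2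
    rw [Nat.cofinite_eq_atTop, eventually_atTop]
    refine ⟨q.toNat, fun k hk => (hr k u ?_).symm⟩
    obtain ⟨m, hm⟩ := Nat.dvd_factorial (by omega) (Nat.le_succ_of_le hk)
    have hm' : ((k + 1).factorial : ℤ) = m * q := by
      rw [hm, Nat.cast_mul, Int.toNat_of_nonneg hq.le, mul_comm]
    rw [InAp, hm']
    exact hu.int_mul m
  exact ⟨r, fun u => ⟨ψ u, hev u⟩, funext fun u => piChar_apply_of_eventually_eq (hev u)⟩

def toChar : P19 → Gchar :=
  Quotient.lift (fun a => ⟨piChar a.1, isChar_piChar a.2⟩) fun a b h =>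
    Subtype.ext ((piChar_eq_iff a.2 b.2).2 h)

theorem toChar_injective : Function.Injective toChar := by
  rintro ⟨a⟩ ⟨b⟩ h
  exact Quotient.sound ((piChar_eq_iff a.2 b.2).1 (congrArg Subtype.val h))

theorem toChar_surjective : Function.Surjective toChar := fun ψ =>
  let ⟨α, hα, h⟩ := ψ.2.exists_piChar_eq
  ⟨⟦⟨α, hα⟩⟧, Subtype.ext h⟩

def polyadicEquiv : P19 ≃ Gchar :=
  Equiv.ofBijective toChar ⟨toChar_injective, toChar_surjective⟩

theorem toChar_polyadicEquiv_symm (ψ : Gchar) : toChar (polyadicEquiv.symm ψ) = ψ :=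
  polyadicEquiv.apply_symm_apply ψ

theorem mem_gridP_iff {p : ℤ} (hp : 0 < p) {x y : P19} :
    y ∈ gridP p x ↔ ∀ u, InAp p u → (toChar y).1 u = (toChar x).1 u := by
  constructor
  · rintro ⟨a, b, rfl, rfl, γ, hz⟩
    refine (piChar_eqOn_iff b.2 a.2 hp).2 ((hz p hp).mono fun k hk => ?_)
    simpa [← sub_sub] using hk.add (dvd_mul_right p (γ.1 k))
  · induction x using Quotient.inductionOn with | h a => ?_
    induction y using Quotient.inductionOn with | h b => ?_
    intro h
    have hdvd := (piChar_eqOn_iff b.2 a.2 hp).1 h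
    refine ⟨a, b, rfl, rfl, ⟨_, (b.2.sub a.2).ediv hp hdvd⟩, fun n _ => hdvd.mono fun k hk => ?_⟩
    simp [Int.mul_ediv_cancel' hk]

theorem image_gridP_zero {p : ℤ} (hp : 0 < p) :
    (fun x => (polyadicEquiv x).1) '' gridP p ⟦zeroStab⟧
      = {φ | IsChar φ ∧ ∀ u, InAp p u → φ u = (u : ℤ → ℂ) 0} := by
  have hzero : ∀ u, (toChar ⟦zeroStab⟧).1 u = (u : ℤ → ℂ) 0 := congrFun piChar_zero
  ext φ
  constructor
  · rintro ⟨x, hx, rfl⟩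
    exact ⟨(toChar x).2, fun u hu => ((mem_gridP_iff hp).1 hx u hu).trans (hzero u)⟩
  · rintro ⟨hφ, h⟩
    have hφ' := toChar_polyadicEquiv_symm ⟨φ, hφ⟩
    refine ⟨_, (mem_gridP_iff hp).2 fun u hu => ?_, congrArg Subtype.val hφ'⟩
    rw [hφ', hzero]
    exact h u hu

theorem isOpen_gridP {p : ℤ} (hp : 0 < p) (x : P19) : @IsOpen P19 sigmaT (gridP p x) :=
  TopologicalSpace.isOpen_generateFrom_of_mem ⟨p, hp, x, rfl⟩

/-- Agreement with `φ` on `𝒜_p` is the Gelfand ball of radius `1` around `φ` at `n ↦ n % p`. -/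
theorem isOpen_setOf_eqOn_inAp {p : ℤ} (hp : 0 < p) (φ : Gchar) :
    @IsOpen Gchar gelfandT {ψ : Gchar | ∀ u, InAp p u → ψ.1 u = φ.1 u} := by
  have hball : {ψ : Gchar | ∀ u, InAp p u → ψ.1 u = φ.1 u}
      = {ψ : Gchar | ‖ψ.1 (resFun p hp) - φ.1 (resFun p hp)‖ < 1} := by
    ext ψ
    refine ⟨fun h => by simp [h _ (inAp_resFun hp)], fun h u hu => ?_⟩
    obtain ⟨r, hr⟩ := ψ.2.exists_residue hp
    obtain ⟨s, hs⟩ := φ.2.exists_residue hp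
    rw [Set.mem_ofPred_eq, hr _ (inAp_resFun hp), hs _ (inAp_resFun hp)] at h
    rw [hr u hu, hs u hu]
    exact hu.eq_of_intModEq (intModEq_of_norm_resFun_sub_lt_one hp h)
  rw [hball]
  exact TopologicalSpace.isOpen_generateFrom_of_mem ⟨_, φ, 1, one_pos, rfl⟩

theorem continuous_polyadicEquiv : @Continuous P19 Gchar sigmaT gelfandT polyadicEquiv := by
  refine (continuous_generateFrom_iff (t := sigmaT)).2 ?_
  rintro _ ⟨u, ψ, R, -, rfl⟩
  refine (@isOpen_iff_forall_mem_open _ sigmaT _).2 fun x hx => ?_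
  obtain ⟨p, hp, hu⟩ := u.2
  refine ⟨gridP p x, fun y hy => ?_, isOpen_gridP hp x, (mem_gridP_iff hp).2 fun _ _ => rfl⟩
  show ‖(toChar y).1 u - ψ.1 u‖ < R
  rw [(mem_gridP_iff hp).1 hy u hu]
  exact hx

theorem continuous_polyadicEquiv_symm :
    @Continuous Gchar P19 gelfandT sigmaT polyadicEquiv.symm := by
  refine (continuous_generateFrom_iff (t := gelfandT)).2 ?_
  rintro _ ⟨p, hp, x, rfl⟩
  have hpre : polyadicEquiv.symm ⁻¹' gridP p x
      = {ψ : Gchar | ∀ u, InAp p u → ψ.1 u = (toChar x).1 u} := by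
    ext ψ
    rw [Set.mem_preimage, mem_gridP_iff hp, toChar_polyadicEquiv_symm]
    rfl
  rw [hpre]
  exact isOpen_setOf_eqOn_inAp hp _

/-- Prüfer's ideal numbers as Gelfand's maximal ideals:  `π` maps each
stabilizer `α` to the character `π α` (the eventual value functional); `π` is a
surjective ring homomorphism from the ring `𝒮` of stabilizers (with pointwise
operations) onto the ring `𝒢` of characters (with convolution operations),
with kernel exactly the set `𝒞₀` of `0`-sequences; the induced quotient map is
a bijection of `𝒫 = 𝒮 ⁄ 𝒞₀` onto `𝒢` carrying, for every positive `p`, the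
ideal `𝒢⁽ᵖ⁾` onto the cluster `V_p`, and it is a homeomorphism from `(𝒫, σ)`
onto `(𝒢, γ)`. -/
theorem prufer_polyadic_iso_gelfand_characters :
    (∀ α : ℕ → ℤ, IsStab α →
      IsChar (piChar α) ∧
        ∀ u : ↥PerFun, ∀ᶠ k in Filter.cofinite, (u : ℤ → ℂ) (α k) = piChar α u) ∧
    (∀ α β : ℕ → ℤ, IsStab α → IsStab β →
      IsStab (fun k => α k + β k) ∧ IsStab (fun k => α k * β k) ∧
      piChar (fun k => α k + β k) = plusConv (piChar α) (piChar β) ∧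
      piChar (fun k => α k * β k) = dotConv (piChar α) (piChar β)) ∧
    (∀ ψ : ↥PerFun → ℂ, IsChar ψ → ∃ α : ℕ → ℤ, IsStab α ∧ piChar α = ψ) ∧
    (∀ α : ℕ → ℤ, IsStab α → (piChar α = theta ↔ IsZeroSeq α)) ∧
    (∃ e : P19 ≃ Gchar,
      (∀ a : StabT, (e ⟦a⟧).1 = piChar a.1) ∧
      (∀ p : ℤ, 0 < p →
        (fun x : P19 => (e x).1) '' gridP p ⟦zeroStab⟧
          = {φ : ↥PerFun → ℂ | IsChar φ ∧ ∀ u, InAp p u → φ u = (u : ℤ → ℂ) 0}) ∧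
      @Continuous P19 Gchar sigmaT gelfandT e ∧
      @Continuous Gchar P19 gelfandT sigmaT e.symm) :=
  ⟨fun _ hα => ⟨isChar_piChar hα, hα.eventually_eq_piChar⟩,
    fun _ _ hα hβ => ⟨hα.add hβ, hα.mul hβ, piChar_add hα hβ, piChar_mul hα hβ⟩,
    fun _ hψ => hψ.exists_piChar_eq,
    fun _ hα => piChar_eq_theta_iff hα,
    polyadicEquiv, fun _ => rfl, fun _ hp => image_gridP_zero hp,
    continuous_polyadicEquiv, continuous_polyadicEquiv_symm⟩

end
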